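/- Let 0 < δ ≤ 1/(64·d²·L) and let x, y ∈ ℝ^d satisfy x = y − δ∇U(y) + √(2δ)·T. Then the matrix I − δ∇²U(y) is invertible and |det(I − δ∇²U(y))^{-1} − 1| ≤ 2·δ·d·L·(‖x‖₂ + 1). -/

import Mathlib

/-!
The Hessian is symmetric, so `det (1 - δ • ∇²U y) = ∏ i, (1 - δ * λᵢ)` over its eigenvalues, and
`|λᵢ| ≤ ‖∇²U y‖ ≤ L`. With `a = δ * L` each factor lies in `[1 - a, 1 + a]`, so by Bernoulli the
product `P` satisfies `1 - d * a ≤ P` and `P * (1 - d * a) ≤ ((1 + a) * (1 - a)) ^ d ≤ 1`; since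
`d * a ≤ 1 / 64`, this puts `P⁻¹` within `2 * d * a` of `1`.
-/

/-- The Hessian matrix of `U : ℝ^d → ℝ` at `x`. -/
noncomputable def hessMat {d : ℕ} (U : EuclideanSpace ℝ (Fin d) → ℝ)
    (x : EuclideanSpace ℝ (Fin d)) : Matrix (Fin d) (Fin d) ℝ :=
  fun i j =>
    iteratedFDeriv ℝ 2 U x ![EuclideanSpace.single i 1, EuclideanSpace.single j 1]

open Matrix Finset

section Product

variable {ι : Type*} [Fintype ι] {x : ι → ℝ} {a : ℝ}

theorem one_sub_card_mul_le_prod_one_sub (hx : ∀ i, |x i| ≤ a) (ha : a ≤ 1) :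
    1 - Fintype.card ι * a ≤ ∏ i, (1 - x i) :=
  calc 1 - Fintype.card ι * a ≤ (1 - a) ^ Fintype.card ι := by
        simpa [sub_eq_add_neg] using one_add_mul_le_pow (a := -a) (by linarith) (Fintype.card ι)
    _ = ∏ _i : ι, (1 - a) := by rw [prod_const, card_univ]
    _ ≤ ∏ i, (1 - x i) := prod_le_prod (fun _ _ => by linarith) fun i _ => by
        linarith [(abs_le.mp (hx i)).2]

theorem prod_one_sub_le_one_add_pow (hx : ∀ i, |x i| ≤ a) (ha : a ≤ 1) :
    ∏ i, (1 - x i) ≤ (1 + a) ^ Fintype.card ι :=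
  calc ∏ i, (1 - x i) ≤ ∏ _i : ι, (1 + a) :=
        prod_le_prod (fun i _ => by linarith [(abs_le.mp (hx i)).2]) fun i _ => by
          linarith [(abs_le.mp (hx i)).1]
    _ = (1 + a) ^ Fintype.card ι := by rw [prod_const, card_univ]

theorem abs_inv_prod_one_sub_sub_one_le (hx : ∀ i, |x i| ≤ a) (ha₀ : 0 ≤ a) (ha₁ : a ≤ 1)
    (hna : 2 * Fintype.card ι * a ≤ 1) :
    0 < ∏ i, (1 - x i) ∧ |(∏ i, (1 - x i))⁻¹ - 1| ≤ 2 * Fintype.card ι * a := by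
  set n := Fintype.card ι
  set P := ∏ i, (1 - x i)
  have hlow : 1 - n * a ≤ P := one_sub_card_mul_le_prod_one_sub hx ha₁
  have hP : 0 < P := by linarith
  have hup : P * (1 - n * a) ≤ 1 :=
    calc P * (1 - n * a) ≤ (1 + a) ^ n * (1 - a) ^ n := by
          refine mul_le_mul (prod_one_sub_le_one_add_pow hx ha₁) ?_ (by linarith) (by positivity)
          simpa [sub_eq_add_neg] using one_add_mul_le_pow (a := -a) (by linarith) n
      _ = (1 - a ^ 2) ^ n := by rw [← mul_pow]; ring
      _ ≤ 1 := pow_le_one₀ (by nlinarith) (by nlinarith)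
  have hna₀ : 0 ≤ n * a := by positivity
  have hinv_low : 1 - n * a ≤ P⁻¹ := by rw [← one_div, le_div_iff₀ hP]; linarith
  have hinv_up : P⁻¹ ≤ 1 + 2 * n * a := by
    rw [inv_le_iff_one_le_mul₀ hP]
    nlinarith [mul_le_mul_of_nonneg_left hlow (by positivity : (0 : ℝ) ≤ 1 + 2 * n * a)]
  exact ⟨hP, abs_le.mpr ⟨by linarith, by linarith⟩⟩

end Product

section Hessian

variable {ι : Type*} [Fintype ι] [DecidableEq ι]

theorem Matrix.IsHermitian.det_one_sub_smul {A : Matrix ι ι ℝ} (hA : A.IsHermitian) (t : ℝ) :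
    (1 - t • A).det = ∏ i, (1 - t * hA.eigenvalues i) := by
  have hcfc : 1 - t • A = cfc (fun s => 1 - t * s) A := by
    rw [cfc_sub _ _ A, cfc_const_one ℝ A, cfc_const_mul t _ A, cfc_id' ℝ A]
  rw [hcfc, hA.cfc_eq]
  simp [IsHermitian.cfc, -Unitary.conjStarAlgAut_apply]

theorem Matrix.IsHermitian.abs_eigenvalues_le {A : Matrix ι ι ℝ} (hA : A.IsHermitian) {C : ℝ}
    (hC : ∀ v : EuclideanSpace ℝ ι, ‖v‖ = 1 → |v ⬝ᵥ A *ᵥ v| ≤ C) (i : ι) :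
    |hA.eigenvalues i| ≤ C := by
  simpa [hA.eigenvalues_eq] using hC _ (hA.eigenvectorBasis.orthonormal.1 i)

variable {d : ℕ} (U : EuclideanSpace ℝ (Fin d) → ℝ) (y : EuclideanSpace ℝ (Fin d))

theorem hessMat_eq_toMatrix₂ :
    hessMat U y = LinearMap.toMatrix₂ (EuclideanSpace.basisFun (Fin d) ℝ).toBasis
      (EuclideanSpace.basisFun (Fin d) ℝ).toBasis (fderiv ℝ (fderiv ℝ U) y).toLinearMap₁₂ := by
  ext i j
  simp [hessMat, iteratedFDeriv_two_apply, LinearMap.toMatrix₂_apply]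

theorem dotProduct_hessMat_mulVec (v w : EuclideanSpace ℝ (Fin d)) :
    v ⬝ᵥ hessMat U y *ᵥ w = iteratedFDeriv ℝ 2 U y ![v, w] := by
  rw [hessMat_eq_toMatrix₂, iteratedFDeriv_two_apply]
  have h := apply_eq_dotProduct_toMatrix₂_mulVec (EuclideanSpace.basisFun (Fin d) ℝ).toBasis
    (EuclideanSpace.basisFun (Fin d) ℝ).toBasis (fderiv ℝ (fderiv ℝ U) y).toLinearMap₁₂ v w
  simp only [ContinuousLinearMap.toLinearMap₁₂_apply_apply_apply, RingHom.coe_id,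
    CompTriple.comp_eq] at h
  exact h.symm

theorem abs_dotProduct_hessMat_mulVec_le (v : EuclideanSpace ℝ (Fin d)) :
    |v ⬝ᵥ hessMat U y *ᵥ v| ≤ ‖iteratedFDeriv ℝ 2 U y‖ * ‖v‖ ^ 2 := by
  simpa [dotProduct_hessMat_mulVec, sq] using (iteratedFDeriv ℝ 2 U y).le_opNorm ![v, v]

theorem isHermitian_hessMat (hU : ContDiff ℝ 2 U) : (hessMat U y).IsHermitian := by
  ext i j
  simp only [conjTranspose_apply, star_trivial, hessMat, iteratedFDeriv_two_apply]
  exact hU.contDiffAt.isSymmSndFDerivAt (by simp) _ _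

end Hessian

theorem stmt5_general {d : ℕ} (hd : 0 < d) (U : EuclideanSpace ℝ (Fin d) → ℝ)
    (L : ℝ) (hL : 0 < L) (hU : ContDiff ℝ 3 U)
    (hHess : ∀ z, ‖iteratedFDeriv ℝ 2 U z‖ ≤ L)
    (δ : ℝ) (hδ0 : 0 < δ) (hδ : δ ≤ 1 / (64 * d ^ 2 * L))
    (x y : EuclideanSpace ℝ (Fin d)) :
    IsUnit (1 - δ • hessMat U y) ∧
      |((1 - δ • hessMat U y).det)⁻¹ - 1| ≤
        2 * δ * (d : ℝ) * L * (‖x‖ + 1) := by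
  have hH := isHermitian_hessMat U y (hU.of_le (by norm_num : (2 : WithTop ℕ∞) ≤ 3))
  have heig (i : Fin d) : |δ * hH.eigenvalues i| ≤ δ * L := by
    rw [abs_mul, abs_of_pos hδ0]
    refine mul_le_mul_of_nonneg_left (hH.abs_eigenvalues_le (fun v hv => ?_) i) hδ0.le
    simpa [hv] using (abs_dotProduct_hessMat_mulVec_le U y v).trans
      (mul_le_mul_of_nonneg_right (hHess y) (sq_nonneg _))
  have hδL : 64 * d ^ 2 * (δ * L) ≤ 1 := by
    rw [le_div_iff₀ (by positivity)] at hδ; linarith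
  have hd₁ : (1 : ℝ) ≤ d := by exact_mod_cast hd
  obtain ⟨hpos, hbound⟩ := abs_inv_prod_one_sub_sub_one_le heig (by positivity) (by nlinarith)
    (by rw [Fintype.card_fin]; nlinarith)
  rw [Fintype.card_fin, ← hH.det_one_sub_smul δ] at hbound
  rw [← hH.det_one_sub_smul δ] at hpos
  refine ⟨(isUnit_iff_isUnit_det _).mpr hpos.ne'.isUnit, hbound.trans ?_⟩
  nlinarith [norm_nonneg x, mul_pos (mul_pos hδ0 hL) (by positivity : (0 : ℝ) < d)]

theorem stmt5 {d : ℕ} (hd : 0 < d) (U : EuclideanSpace ℝ (Fin d) → ℝ)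
    (L : ℝ) (hL : 0 < L) (hU : ContDiff ℝ 3 U)
    (hgrad0 : gradient U 0 = 0)
    (hHess : ∀ z, ‖iteratedFDeriv ℝ 2 U z‖ ≤ L)
    (hD3 : ∀ z, ‖iteratedFDeriv ℝ 3 U z‖ ≤ L)
    (T : EuclideanSpace ℝ (Fin d)) (hT : ‖T‖ ≤ Real.sqrt L)
    (δ : ℝ) (hδ0 : 0 < δ) (hδ : δ ≤ 1 / (64 * d ^ 2 * L))
    (x y : EuclideanSpace ℝ (Fin d))
    (hxy : x = y - δ • gradient U y + Real.sqrt (2 * δ) • T) :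
    IsUnit (1 - δ • hessMat U y) ∧
      |((1 - δ • hessMat U y).det)⁻¹ - 1| ≤
        2 * δ * (d : ℝ) * L * (‖x‖ + 1) :=
  stmt5_general hd U L hL hU hHess δ hδ0 hδ x y
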